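/- Define Δ : Z[x]/(x^2) → Z[x]/(x^2) ⊗ Z[x]/(x^2) by Δ(1) = 1⊗x + x⊗1 and Δ(x) = x⊗x, extended Z-linearly, and extend to (Z[x]/(x^2))^{⊗2} factor-wise with Koszul-free signs. Then for the submodule N of (Z[x]/(x^2))^{⊗2} ⊕ (Z[x]/(x^2))^{⊗2} (indexed by the unnested and nested configurations) generated by the Type I element (x⊗1 + 1⊗x, -(x⊗1 + 1⊗x)) and the Type II element (x⊗x, -(x⊗x)), the map Δ⊕Δ sends N into N ⊗ (whole module) + (whole module) ⊗ N; hence Δ descends to a well-defined comultiplication on the quotient. -/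

import Mathlib

/-! With `a = x⊗1 + 1⊗x` and `b = x⊗x`, the generators of `N` are `(a, -a)` and `(b, -b)`, and
`Δa = a⊗b + b⊗a`, `Δb = b⊗b` only involve `a` and `b`. On `(v, -v)` the map `Δ ⊕ Δ` is the
difference of the two copies of `Δv`, and for a pure tensor that difference splits as
`(u, -u) ⊗ (u', 0) + (0, u) ⊗ (u', -u')`, which lies in `N ⊗ M + M ⊗ N` once `u, u' ∈ {a, b}`. -/

open TensorProduct

/-- `A^{⊗2}` for `A = ℤ[x]/(x²)`: the free `ℤ`-module on `Bool × Bool`, where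
`true` in a coordinate means that factor is `x` (a dot) and `false` means `1`. -/
abbrev V : Type := (Bool × Bool) →₀ ℤ

/-- basis vector -/
noncomputable def e (p : Bool × Bool) : V := Finsupp.single p 1

/-- The value of the factor-wise diagonal `Δ⊗Δ` (with `Δ(1) = 1⊗x + x⊗1`,
`Δ(x) = x⊗x`) on a pure tensor, written in the basis `e`. -/
noncomputable def expand : Bool × Bool → V ⊗[ℤ] V
  | (true, true) => e (true, true) ⊗ₜ e (true, true)
  | (true, false) => e (true, false) ⊗ₜ e (true, true) + e (true, true) ⊗ₜ e (true, false)
  | (false, true) => e (false, true) ⊗ₜ e (true, true) + e (true, true) ⊗ₜ e (false, true)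
  | (false, false) =>
      e (false, false) ⊗ₜ e (true, true) + e (true, true) ⊗ₜ e (false, false) +
      e (true, false) ⊗ₜ e (false, true) + e (false, true) ⊗ₜ e (true, false)

/-- The comultiplication `Δ : V → V ⊗ V`, extended `ℤ`-linearly. -/
noncomputable def Delta : V →ₗ[ℤ] V ⊗[ℤ] V :=
  (Finsupp.lift (V ⊗[ℤ] V) ℤ (Bool × Bool)) expand

/-- The module of marked incompressible surfaces for `n = 2`: one copy of `V` for
the unnested configuration and one for the nested configuration. -/
abbrev M2 : Type := V × V

/-- `Δ ⊕ Δ` followed by the inclusions `V ⊗ V → M2 ⊗ M2` of each summand. -/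
noncomputable def DeltaM : M2 →ₗ[ℤ] M2 ⊗[ℤ] M2 :=
  LinearMap.coprod
    ((TensorProduct.map (LinearMap.inl ℤ V V) (LinearMap.inl ℤ V V)) ∘ₗ Delta)
    ((TensorProduct.map (LinearMap.inr ℤ V V) (LinearMap.inr ℤ V V)) ∘ₗ Delta)

/-- The submodule `N` generated by the Type I element (one dot, unnested minus
nested) and the Type II element (two dots, unnested minus nested). -/
noncomputable def NSub : Submodule ℤ M2 :=
  Submodule.span ℤ
    {((e (true, false) + e (false, true), -(e (true, false) + e (false, true))) : M2),
     ((e (true, true), -(e (true, true))) : M2)}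

/-- `N ⊗ M2 + M2 ⊗ N` inside `M2 ⊗ M2`. -/
noncomputable def NMix : Submodule ℤ (M2 ⊗[ℤ] M2) :=
  Submodule.span ℤ {z | ∃ a ∈ NSub, ∃ b : M2, z = a ⊗ₜ b} ⊔
  Submodule.span ℤ {z | ∃ a : M2, ∃ b ∈ NSub, z = a ⊗ₜ b}

lemma Prod.inl_tmul_inl_sub_inr_tmul_inr {R M N : Type*} [CommRing R] [AddCommGroup M]
    [Module R M] [AddCommGroup N] [Module R N] (m : M) (n : N) :
    ((m, 0) : M × M) ⊗ₜ[R] ((n, 0) : N × N) - ((0, m) : M × M) ⊗ₜ[R] ((0, n) : N × N) =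
      ((m, -m) : M × M) ⊗ₜ[R] ((n, 0) : N × N) + ((0, m) : M × M) ⊗ₜ[R] ((n, -n) : N × N) := by
  have hm : ((m, -m) : M × M) = (m, 0) - (0, m) := by simp
  have hn : ((n, -n) : N × N) = (n, 0) - (0, n) := by simp
  rw [hm, hn, sub_tmul, tmul_sub]
  abel

/-- `x ⊗ 1 + 1 ⊗ x` -/
noncomputable def oneDot : V := e (true, false) + e (false, true)

/-- `x ⊗ x` -/
noncomputable def twoDots : V := e (true, true)

lemma Delta_e (p : Bool × Bool) : Delta (e p) = expand p := by
  simp [Delta, e]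

lemma Delta_oneDot : Delta oneDot = oneDot ⊗ₜ twoDots + twoDots ⊗ₜ oneDot := by
  simp only [oneDot, twoDots, map_add, Delta_e, expand, add_tmul, tmul_add]
  abel

lemma Delta_twoDots : Delta twoDots = twoDots ⊗ₜ twoDots :=
  Delta_e _

lemma DeltaM_neg (v : V) :
    DeltaM (v, -v) = map (LinearMap.inl ℤ V V) (LinearMap.inl ℤ V V) (Delta v) -
      map (LinearMap.inr ℤ V V) (LinearMap.inr ℤ V V) (Delta v) := by
  rw [DeltaM, LinearMap.coprod_apply, map_neg, sub_eq_add_neg]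
  rfl

lemma map_inl_tmul_sub_map_inr_tmul_mem_NMix {u u' : V} (hu : ((u, -u) : M2) ∈ NSub)
    (hu' : ((u', -u') : M2) ∈ NSub) :
    map (LinearMap.inl ℤ V V) (LinearMap.inl ℤ V V) (u ⊗ₜ u') -
      map (LinearMap.inr ℤ V V) (LinearMap.inr ℤ V V) (u ⊗ₜ u') ∈ NMix := by
  rw [map_tmul, map_tmul, LinearMap.inl_apply, LinearMap.inl_apply, LinearMap.inr_apply,
    LinearMap.inr_apply, Prod.inl_tmul_inl_sub_inr_tmul_inr]
  exact add_mem (Submodule.mem_sup_left (Submodule.subset_span ⟨_, hu, _, rfl⟩))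
    (Submodule.mem_sup_right (Submodule.subset_span ⟨_, _, hu', rfl⟩))

lemma oneDot_mem_NSub : ((oneDot, -oneDot) : M2) ∈ NSub :=
  Submodule.subset_span (Set.mem_insert _ _)

lemma twoDots_mem_NSub : ((twoDots, -twoDots) : M2) ∈ NSub :=
  Submodule.subset_span (Set.mem_insert_of_mem _ rfl)

/-- `Δ ⊕ Δ` maps `N` into `N ⊗ M2 + M2 ⊗ N`; hence the comultiplication descends
to the quotient `M2/N` (the `n = 2` Bar-Natan skein module). -/
theorem stmt16 : ∀ y ∈ NSub, DeltaM y ∈ NMix := by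
  have hgen : NSub ≤ NMix.comap DeltaM := by
    refine Submodule.span_le.mpr ?_
    rintro _ (rfl | rfl)
    · change DeltaM (oneDot, -oneDot) ∈ NMix
      rw [DeltaM_neg, Delta_oneDot, map_add, map_add, add_sub_add_comm]
      exact add_mem (map_inl_tmul_sub_map_inr_tmul_mem_NMix oneDot_mem_NSub twoDots_mem_NSub)
        (map_inl_tmul_sub_map_inr_tmul_mem_NMix twoDots_mem_NSub oneDot_mem_NSub)
    · change DeltaM (twoDots, -twoDots) ∈ NMix
      rw [DeltaM_neg, Delta_twoDots]
      exact map_inl_tmul_sub_map_inr_tmul_mem_NMix twoDots_mem_NSub twoDots_mem_NSub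
  exact fun y hy => hgen hy
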